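/- arXiv:1505.04468 — 2 statements merged into one kernel-verified Lean document; each statement's English description precedes it below -/
import Mathlib

section
/- Let G be a soluble group and w a multilinear commutator word such that every w-value in G has finite order. Then the verbal subgroup w(G) is locally finite. (Special case: if G is soluble and every commutator [x,y] has finite order, then the derived subgroup G' is locally finite.) -/
/-- Formal commutator words in variables indexed by `ℕ`. -/
inductive CommWord : Type
  | var : ℕ → CommWord
  | comm : CommWord → CommWord → CommWord

namespace CommWord

open scoped commutatorElement

/-- The set of variables occurring in a commutator word. -/
def vars : CommWord → Finset ℕ
  | var n => {n}
  | comm u v => u.vars ∪ v.vars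

/-- A commutator word is multilinear if all its variables are distinct. -/
def Multilinear : CommWord → Prop
  | var _ => True
  | comm u v => Multilinear u ∧ Multilinear v ∧ Disjoint u.vars v.vars

/-- Evaluation of a commutator word in a group under an assignment of the variables. -/
def eval {G : Type*} [Group G] (f : ℕ → G) : CommWord → G
  | var n => f n
  | comm u v => ⁅eval f u, eval f v⁆

end CommWord

/-- The set of `w`-values in `G`. -/
def wValues (w : CommWord) (G : Type*) [Group G] : Set G :=
  {x | ∃ f : ℕ → G, CommWord.eval f w = x}

/-- The verbal subgroup `w(G)` generated by all `w`-values. -/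
def verbal (w : CommWord) (G : Type*) [Group G] : Subgroup G :=
  Subgroup.closure (wValues w G)

/-- `x` is a product of at most `N` `w`-values. -/
def IsProdOfWValues (w : CommWord) {G : Type*} [Group G] (N : ℕ) (x : G) : Prop :=
  ∃ l : List G, l.length ≤ N ∧ (∀ y ∈ l, y ∈ wValues w G) ∧ l.prod = x

/-!
Induction on the derived length of `G`. Let `A` be the last nontrivial term of the derived
series, an abelian normal subgroup, and let `N ≤ A` be generated by the `w`-values with an entry
in `A`; being abelian and generated by elements of finite order, `N` is locally finite. Because
`w` is multilinear, modulo `N` a `w`-value only depends on its entries modulo `A`, so `A N / N`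
centralizes `w(G) N / N`. For finitely many `w`-values `T`, the image of `⟨T⟩` in `G / A` is
finite by induction, hence the image of `⟨T⟩` in `G / N` is generated by finitely many elements
of finite order and has a central subgroup of finite index. By Schur's theorem it is finite, and
`⟨T⟩` is then an extension of a finitely generated subgroup of `N` by a finite group.
-/

open scoped commutatorElement
open Subgroup

universe u

section GroupTheory

variable {G Q : Type*} [Group G] [Group Q]

lemma exists_finite_subset_of_mem_closure {X : Set G} {g : G} (hg : g ∈ closure X) :
    ∃ T ⊆ X, T.Finite ∧ g ∈ closure T := by
  induction hg using closure_induction with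
  | mem x hx => exact ⟨{x}, by simpa using hx, Set.finite_singleton x, subset_closure rfl⟩
  | one => exact ⟨∅, Set.empty_subset X, Set.finite_empty, one_mem _⟩
  | mul a b _ _ ha hb =>
    obtain ⟨Ta, hTa, hTa_fin, ha⟩ := ha
    obtain ⟨Tb, hTb, hTb_fin, hb⟩ := hb
    exact ⟨Ta ∪ Tb, Set.union_subset hTa hTb, hTa_fin.union hTb_fin,
      mul_mem (closure_mono Set.subset_union_left ha) (closure_mono Set.subset_union_right hb)⟩
  | inv a _ ha =>
    obtain ⟨T, hT, hT_fin, ha⟩ := ha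
    exact ⟨T, hT, hT_fin, inv_mem ha⟩

lemma exists_finite_subset_of_subset_closure {X S : Set G} (hS : S.Finite)
    (hSX : S ⊆ closure X) : ∃ T ⊆ X, T.Finite ∧ S ⊆ closure T := by
  choose! T hTX hT_fin hT using fun s (hs : s ∈ S) => exists_finite_subset_of_mem_closure (hSX hs)
  refine ⟨⋃ s ∈ S, T s, Set.iUnion₂_subset hTX, hS.biUnion hT_fin, fun s hs => ?_⟩
  exact closure_mono (Set.subset_biUnion_of_mem hs) (hT s hs)

lemma MonoidHom.commute_of_mem_closure (f : G →* Q) {X Y : Set G}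
    (h : ∀ x ∈ X, ∀ y ∈ Y, Commute (f x) (f y)) {p q : G} (hp : p ∈ closure X)
    (hq : q ∈ closure Y) : Commute (f p) (f q) := by
  have hY : closure Y ≤ (centralizer (f '' X)).comap f := by
    rw [closure_le]
    rintro y hy _ ⟨x, hx, rfl⟩
    exact (h x hx y hy).eq
  have hX : f p ∈ closure (f '' X) := by
    rw [← MonoidHom.map_closure]
    exact mem_map_of_mem f hp
  rw [← centralizer_closure] at hY
  exact hY hq (f p) hX

lemma isOfFinOrder_of_mem_closure {X : Set G} (hcomm : ∀ x ∈ X, ∀ y ∈ X, Commute x y)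
    (htor : ∀ x ∈ X, IsOfFinOrder x) {g : G} (hg : g ∈ closure X) : IsOfFinOrder g := by
  induction hg using closure_induction with
  | mem x hx => exact htor x hx
  | one => exact IsOfFinOrder.one
  | mul a b ha hb iha ihb =>
    exact ((MonoidHom.id G).commute_of_mem_closure hcomm ha hb).isOfFinOrder_mul iha ihb
  | inv a _ iha => exact iha.inv

lemma commutatorElement_mul_mul_eq {P₀ Q₀ p q : G} (hpQ₀ : Commute p Q₀) (hpq : Commute p q)
    (hqP₀ : Commute q P₀) : ⁅P₀ * p, Q₀ * q⁆ = ⁅P₀, Q₀⁆ := by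
  calc ⁅P₀ * p, Q₀ * q⁆
      = P₀ * (p * (Q₀ * q)) * p⁻¹ * P₀⁻¹ * (Q₀ * q)⁻¹ := by
        rw [commutatorElement_def]; group
    _ = P₀ * Q₀ * (q * P₀⁻¹) * q⁻¹ * Q₀⁻¹ := by
        rw [(hpQ₀.mul_right hpq).eq]; group
    _ = ⁅P₀, Q₀⁆ := by
        rw [hqP₀.inv_right.eq, commutatorElement_def]; group

open scoped IsMulCommutative in
/-- Schur's theorem, torsion case: the transfer `g ↦ g ^ [K : Z(K)]` into the centre sends the
torsion generators to torsion elements. -/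
theorem finite_of_finiteIndex_center {K : Type*} [Group K] [Group.FG K]
    [(center K).FiniteIndex] {X : Set K} (hX : closure X = ⊤)
    (htor : ∀ x ∈ X, IsOfFinOrder x) : Finite K := by
  set φ := MonoidHom.transferCenterPow K
  have hφ (g : K) : IsOfFinOrder (φ g) := by
    have hg : φ g ∈ closure (φ '' X) := by
      rw [← MonoidHom.map_closure, hX]
      exact mem_map_of_mem φ (mem_top g)
    refine isOfFinOrder_of_mem_closure (fun _ _ _ _ => Commute.all _ _) ?_ hg
    rintro _ ⟨x, hx, rfl⟩
    exact φ.isOfFinOrder (htor x hx)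
  have hcenter : IsMulTorsion (center K) := fun z => by
    have hz : φ z = z ^ (center K).index := Subtype.ext (by simp [φ])
    exact (hz ▸ hφ z).of_pow FiniteIndex.index_ne_zero
  have := CommGroup.finite_of_fg_isMulTorsion _ hcenter
  exact (finite_iff_finite_and_finiteIndex (center K)).mpr ⟨this, inferInstance⟩

open scoped IsMulCommutative in
theorem Subgroup.FG.finite_of_finite_map {K : Subgroup G} (hK : K.FG) (f : G →* Q)
    [Finite (K.map f)] (hcomm : ∀ a ∈ f.ker, ∀ b ∈ f.ker, Commute a b)
    (htor : ∀ x ∈ f.ker, IsOfFinOrder x) : Finite K := by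
  have := (Group.fg_iff_subgroup_fg K).mpr hK
  set φ := f.comp K.subtype
  have : Finite φ.range := by rwa [MonoidHom.range_comp, range_subtype]
  have : IsMulCommutative φ.ker :=
    ⟨⟨fun a b => Subtype.ext (Subtype.ext (hcomm _ a.2 _ b.2).eq)⟩⟩
  have : Finite φ.ker := CommGroup.finite_of_fg_isMulTorsion _ fun x =>
    Submonoid.isOfFinOrder_coe.mp (Submonoid.isOfFinOrder_coe.mp (htor _ x.2))
  exact φ.finite_iff_finite_ker_range.mpr ⟨this, inferInstance⟩

lemma commute_mk_of_commutatorElement_mem {N : Subgroup G} [N.Normal]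
    {x y : G} (h : ⁅x, y⁆ ∈ N) : Commute (x : G ⧸ N) (y : G ⧸ N) := by
  rw [← commutatorElement_eq_one_iff_commute]
  exact (QuotientGroup.eq_one_iff _).mpr h

end GroupTheory

namespace CommWord

variable {G : Type*} [Group G]

lemma eval_congr : ∀ (w : CommWord) {f g : ℕ → G}, (∀ n ∈ w.vars, f n = g n) →
    eval f w = eval g w
  | var n, _, _, h => h n (Finset.mem_singleton_self n)
  | comm u v, _, _, h => congrArg₂ (⁅·, ·⁆)
      (eval_congr u fun n hn => h n (Finset.mem_union_left _ hn))
      (eval_congr v fun n hn => h n (Finset.mem_union_right _ hn))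

lemma eval_piecewise_of_subset (w : CommWord) {s : Finset ℕ} (hs : w.vars ⊆ s)
    (f g : ℕ → G) : eval (s.piecewise f g) w = eval f w :=
  eval_congr w fun _ hn => s.piecewise_eq_of_mem f g (hs hn)

lemma eval_piecewise_of_disjoint (w : CommWord) {s : Finset ℕ} (hs : Disjoint s w.vars)
    (f g : ℕ → G) : eval (s.piecewise f g) w = eval g w :=
  eval_congr w fun _ hn => s.piecewise_eq_of_notMem f g (Finset.disjoint_right.mp hs hn)

lemma eval_map {H : Type*} [Group H] (φ : G →* H) (f : ℕ → G) :
    ∀ w : CommWord, eval (φ ∘ f) w = φ (eval f w)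
  | var _ => rfl
  | comm u v => by
    simp only [eval, map_commutatorElement, eval_map φ f u, eval_map φ f v]

lemma eval_conj (g : G) (f : ℕ → G) (w : CommWord) :
    eval (fun n => g * f n * g⁻¹) w = g * eval f w * g⁻¹ :=
  eval_map (MulAut.conj g).toMonoidHom f w

lemma eval_eq_one_of_mem_vars {f : ℕ → G} : ∀ (w : CommWord) {n : ℕ},
    n ∈ w.vars → f n = 1 → eval f w = 1
  | var _, _, hn, h1 => Finset.mem_singleton.mp hn ▸ h1
  | comm u v, _, hn, h1 => by
    rcases Finset.mem_union.mp hn with hu | hv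
    · simp only [eval, eval_eq_one_of_mem_vars u hu h1, commutatorElement_one_left]
    · simp only [eval, eval_eq_one_of_mem_vars v hv h1, commutatorElement_one_right]

end CommWord

section WValues

variable {G H : Type*} [Group G] [Group H]

lemma image_wValues_subset (φ : G →* H) (w : CommWord) : φ '' wValues w G ⊆ wValues w H := by
  rintro _ ⟨_, ⟨f, rfl⟩, rfl⟩
  exact ⟨φ ∘ f, CommWord.eval_map φ f w⟩

lemma wValues_subset_image_of_surjective {φ : G →* H} (hφ : Function.Surjective φ)
    (w : CommWord) : wValues w H ⊆ φ '' wValues w G := by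
  rintro _ ⟨f, rfl⟩
  choose g hg using fun n => hφ (f n)
  refine ⟨CommWord.eval g w, ⟨g, rfl⟩, ?_⟩
  rw [← CommWord.eval_map, show φ ∘ g = f from funext hg]

end WValues

section EntryIn

variable {G : Type*} [Group G]

def wValuesWithEntryIn (w : CommWord) (A : Subgroup G) : Set G :=
  {x | ∃ f : ℕ → G, (∃ n ∈ w.vars, f n ∈ A) ∧ CommWord.eval f w = x}

def verbalWithEntryIn (w : CommWord) (A : Subgroup G) : Subgroup G :=
  closure (wValuesWithEntryIn w A)

lemma wValuesWithEntryIn_subset (w : CommWord) (A : Subgroup G) :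
    wValuesWithEntryIn w A ⊆ wValues w G := fun _ ⟨f, _, hf⟩ => ⟨f, hf⟩

lemma CommWord.eval_comm_piecewise {u v : CommWord} (hd : Disjoint u.vars v.vars)
    (f g : ℕ → G) : eval (u.vars.piecewise f g) (comm u v) = ⁅eval f u, eval g v⁆ :=
  congrArg₂ (⁅·, ·⁆) (eval_piecewise_of_subset u subset_rfl f g)
    (eval_piecewise_of_disjoint v hd f g)

lemma commutatorElement_mem_wValuesWithEntryIn_left {u v : CommWord}
    (hd : Disjoint u.vars v.vars) (A : Subgroup G) {x y : G} (hx : x ∈ wValuesWithEntryIn u A)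
    (hy : y ∈ wValues v G) : ⁅x, y⁆ ∈ wValuesWithEntryIn (.comm u v) A := by
  obtain ⟨f, ⟨n, hn, hfn⟩, rfl⟩ := hx
  obtain ⟨g, rfl⟩ := hy
  refine ⟨u.vars.piecewise f g, ⟨n, Finset.mem_union_left _ hn, ?_⟩,
    CommWord.eval_comm_piecewise hd f g⟩
  rwa [Finset.piecewise_eq_of_mem _ _ _ hn]

lemma commutatorElement_mem_wValuesWithEntryIn_right {u v : CommWord}
    (hd : Disjoint u.vars v.vars) (A : Subgroup G) {x y : G} (hx : x ∈ wValues u G)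
    (hy : y ∈ wValuesWithEntryIn v A) : ⁅x, y⁆ ∈ wValuesWithEntryIn (.comm u v) A := by
  obtain ⟨f, rfl⟩ := hx
  obtain ⟨g, ⟨n, hn, hgn⟩, rfl⟩ := hy
  refine ⟨u.vars.piecewise f g, ⟨n, Finset.mem_union_right _ hn, ?_⟩,
    CommWord.eval_comm_piecewise hd f g⟩
  rwa [Finset.piecewise_eq_of_notMem _ _ _ (Finset.disjoint_right.mp hd hn)]

variable (w : CommWord) (A : Subgroup G) [hA : A.Normal]

instance verbalWithEntryIn_normal : (verbalWithEntryIn w A).Normal := by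
  refine normalizer_eq_top_iff.mp (top_le_iff.mp (le_normalizer_closure_iff.mpr ?_))
  rintro g - _ ⟨f, ⟨n, hn, hfn⟩, rfl⟩
  exact subset_closure ⟨fun n => g * f n * g⁻¹, ⟨n, hn, hA.conj_mem _ hfn g⟩,
    CommWord.eval_conj g f w⟩

lemma verbalWithEntryIn_le : verbalWithEntryIn w A ≤ A := by
  rw [verbalWithEntryIn, closure_le]
  rintro _ ⟨f, ⟨n, hn, hfn⟩, rfl⟩
  rw [SetLike.mem_coe, ← QuotientGroup.eq_one_iff, ← QuotientGroup.mk'_apply,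
    ← CommWord.eval_map]
  exact CommWord.eval_eq_one_of_mem_vars w hn ((QuotientGroup.eq_one_iff _).mpr hfn)

end EntryIn

namespace CommWord

variable {G : Type*} [Group G] (A : Subgroup G) [A.Normal]

theorem mk_eval_eq_of_mk_eq : ∀ {w : CommWord}, w.Multilinear → ∀ {f g : ℕ → G},
    (∀ n ∈ w.vars, (f n : G ⧸ A) = g n) →
    ((eval f w : G) : G ⧸ verbalWithEntryIn w A) = eval g w
  | var n, _, f, g, h => by
    have hn := Finset.mem_singleton_self n
    exact QuotientGroup.eq.mpr (subset_closure
      ⟨fun _ => (f n)⁻¹ * g n, ⟨n, hn, QuotientGroup.eq.mp (h n hn)⟩, rfl⟩)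
  | comm u v, ⟨hu, hv, hd⟩, f, g, h => by
    set N := verbalWithEntryIn (comm u v) A
    have hp := QuotientGroup.eq.mp
      (mk_eval_eq_of_mk_eq hu fun n hn => h n (Finset.mem_union_left _ hn))
    have hq := QuotientGroup.eq.mp
      (mk_eval_eq_of_mk_eq hv fun n hn => h n (Finset.mem_union_right _ hn))
    have hu_comm {p q : G} (hp : p ∈ verbalWithEntryIn u A) (hq : q ∈ verbal v G) :
        Commute (p : G ⧸ N) q :=
      (QuotientGroup.mk' N).commute_of_mem_closure (fun _ hx _ hy =>
        commute_mk_of_commutatorElement_mem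
          (subset_closure (commutatorElement_mem_wValuesWithEntryIn_left hd A hx hy))) hp hq
    have hv_comm {p q : G} (hp : p ∈ verbal u G) (hq : q ∈ verbalWithEntryIn v A) :
        Commute (p : G ⧸ N) q :=
      (QuotientGroup.mk' N).commute_of_mem_closure (fun _ hx _ hy =>
        commute_mk_of_commutatorElement_mem
          (subset_closure (commutatorElement_mem_wValuesWithEntryIn_right hd A hx hy))) hp hq
    have hf_u : eval f u ∈ verbal u G := subset_closure ⟨f, rfl⟩
    have hf_v : eval f v ∈ verbal v G := subset_closure ⟨f, rfl⟩
    have hq_v : (eval f v)⁻¹ * eval g v ∈ verbal v G :=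
      closure_mono (wValuesWithEntryIn_subset v A) hq
    calc ((eval f (comm u v) : G) : G ⧸ N)
        = ⁅((eval f u : G) : G ⧸ N) * ↑((eval f u)⁻¹ * eval g u),
            ((eval f v : G) : G ⧸ N) * ↑((eval f v)⁻¹ * eval g v)⁆ :=
          (commutatorElement_mul_mul_eq (hu_comm hp hf_v) (hu_comm hp hq_v)
            (hv_comm hf_u hq).symm).symm
      _ = eval g (comm u v) := by
          rw [← QuotientGroup.mk_mul, ← QuotientGroup.mk_mul, mul_inv_cancel_left,
            mul_inv_cancel_left]
          exact (map_commutatorElement (QuotientGroup.mk' N) _ _).symm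

theorem commute_mk_of_mem_verbal {w : CommWord} (hw : w.Multilinear) {a g : G} (ha : a ∈ A)
    (hg : g ∈ verbal w G) : Commute (a : G ⧸ verbalWithEntryIn w A) g := by
  refine (QuotientGroup.mk' _).commute_of_mem_closure (X := A) (fun a ha s hs => ?_)
    (subset_closure ha) hg
  obtain ⟨f, rfl⟩ := hs
  have hconj : ((eval f w : G) : G ⧸ verbalWithEntryIn w A) = ↑(a * eval f w * a⁻¹) := by
    rw [← eval_conj]
    refine mk_eval_eq_of_mk_eq A hw fun n _ => ?_
    have ha' : (a : G ⧸ A) = 1 := (QuotientGroup.eq_one_iff a).mpr ha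
    simp [ha']
  simp only [QuotientGroup.mk_mul, QuotientGroup.mk_inv] at hconj
  exact (eq_mul_inv_iff_mul_eq.mp hconj).symm

end CommWord

section InductionStep

variable {G : Type*} [Group G] {w : CommWord} {A : Subgroup G} [A.Normal]

theorem finite_map_mk_verbalWithEntryIn (hw : w.Multilinear)
    (hord : ∀ x ∈ wValues w G, IsOfFinOrder x) {T : Set G} (hTw : T ⊆ wValues w G)
    (hT : T.Finite) (hfin : Finite ((closure T).map (QuotientGroup.mk' A))) :
    Finite ((closure T).map (QuotientGroup.mk' (verbalWithEntryIn w A))) := by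
  set N := verbalWithEntryIn w A
  have hNA : N ≤ A := verbalWithEntryIn_le w A
  set π := QuotientGroup.mk' N
  set τ : G ⧸ N →* G ⧸ A := QuotientGroup.map N A (MonoidHom.id G) hNA
  have hτπ : τ.comp π = QuotientGroup.mk' A :=
    MonoidHom.ext fun x => QuotientGroup.map_mk N A (MonoidHom.id G) hNA x
  have := (hT.image π).to_subtype
  set ψ := τ.comp (closure (π '' T)).subtype
  have : Finite ψ.range := by
    rwa [MonoidHom.range_comp, range_subtype, ← MonoidHom.map_closure, map_map, hτπ]
  have hker : ψ.ker ≤ center (closure (π '' T)) := by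
    intro z hz
    rw [mem_center_iff]
    intro h
    obtain ⟨a, ha⟩ := QuotientGroup.mk_surjective (z : G ⧸ N)
    obtain ⟨t, ht, hth⟩ : (h : G ⧸ N) ∈ (closure T).map π := by
      rw [MonoidHom.map_closure]; exact h.2
    have haA : a ∈ A := by
      have : τ (π a) = 1 := by rw [show π a = z from ha]; exact hz
      rwa [← MonoidHom.comp_apply, hτπ, QuotientGroup.mk'_apply,
        QuotientGroup.eq_one_iff] at this
    have hc := CommWord.commute_mk_of_mem_verbal A hw haA (closure_mono hTw ht)
    rw [ha, show (t : G ⧸ N) = h from hth] at hc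
    exact Subtype.ext hc.eq.symm
  have := finiteIndex_of_le hker
  rw [MonoidHom.map_closure]
  refine finite_of_finiteIndex_center closure_closure_coe_preimage ?_
  rintro x ⟨t, ht, htx⟩
  exact Submonoid.isOfFinOrder_coe.mp (htx ▸ π.isOfFinOrder (hord t (hTw ht)))

theorem finite_closure_of_finite_map_mk (hw : w.Multilinear)
    (hA : ∀ a ∈ A, ∀ b ∈ A, Commute a b) (hord : ∀ x ∈ wValues w G, IsOfFinOrder x)
    {T : Set G} (hTw : T ⊆ wValues w G) (hT : T.Finite)
    (hfin : Finite ((closure T).map (QuotientGroup.mk' A))) : Finite (closure T) := by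
  set N := verbalWithEntryIn w A
  have hNA : N ≤ A := verbalWithEntryIn_le w A
  have : Finite ((closure T).map (QuotientGroup.mk' N)) :=
    finite_map_mk_verbalWithEntryIn hw hord hTw hT hfin
  refine ((fg_iff _).mpr ⟨T, rfl, hT⟩).finite_of_finite_map (QuotientGroup.mk' N) ?_ ?_ <;>
    rw [QuotientGroup.ker_mk']
  · exact fun a ha b hb => hA a (hNA ha) b (hNA hb)
  · exact fun x hx => isOfFinOrder_of_mem_closure
      (fun a ha b hb => hA a (hNA (subset_closure ha)) b (hNA (subset_closure hb)))
      (fun a ha => hord a (wValuesWithEntryIn_subset w A ha)) hx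

end InductionStep

theorem finite_closure_of_derivedSeries_eq_bot {w : CommWord} (hw : w.Multilinear) (n : ℕ) :
    ∀ {G : Type u} [Group G], derivedSeries G n = ⊥ →
      (∀ x ∈ wValues w G, IsOfFinOrder x) →
      ∀ {T : Set G}, T ⊆ wValues w G → T.Finite → Finite (closure T) := by
  induction n with
  | zero =>
    intro G _ hG _ T _ _
    rw [eq_bot_iff.mpr (hG ▸ le_top : closure T ≤ ⊥)]
    infer_instance
  | succ n ih =>
    intro G _ hG hord T hTw hT
    set A := derivedSeries G n
    have hA : ∀ a ∈ A, ∀ b ∈ A, Commute a b := fun a ha b hb =>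
      commutatorElement_eq_one_iff_commute.mp <| by
        rw [← mem_bot, ← hG, derivedSeries_succ]
        exact commutator_mem_commutator ha hb
    have hσ := QuotientGroup.mk'_surjective A
    refine finite_closure_of_finite_map_mk hw hA hord hTw hT ?_
    rw [MonoidHom.map_closure]
    refine ih ?_ ?_ ((Set.image_mono hTw).trans (image_wValues_subset _ w)) (hT.image _)
    · rw [← map_derivedSeries_eq hσ, QuotientGroup.map_mk'_self]
    · intro x hx
      obtain ⟨y, hy, rfl⟩ := wValues_subset_image_of_surjective hσ w hx
      exact MonoidHom.isOfFinOrder _ (hord y hy)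

theorem verbal_locallyFinite_of_solvable (G : Type*) [Group G]
    (w : CommWord) (hw : w.Multilinear) (hsol : IsSolvable G)
    (hord : ∀ x ∈ wValues w G, IsOfFinOrder x) :
    ∀ H : Subgroup ↥(verbal w G), H.FG → Finite ↥H := by
  intro H hH
  obtain ⟨n, hn⟩ := hsol.solvable
  obtain ⟨S, rfl, hS⟩ := (fg_iff H).mp hH
  obtain ⟨T, hTw, hT, hST⟩ := exists_finite_subset_of_subset_closure (hS.image Subtype.val)
    (X := wValues w G) (Set.image_subset_iff.mpr fun s _ => s.2)
  have := finite_closure_of_derivedSeries_eq_bot hw n hn hord hTw hT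
  have hle : (closure S).map (verbal w G).subtype ≤ closure T := by
    rw [MonoidHom.map_closure]
    exact (closure_le _).mpr hST
  exact Finite.of_injective (fun x => (⟨x, hle (mem_map_of_mem _ x.2)⟩ : closure T))
    fun x y hxy => by simpa using hxy
end

section
/- Let G be a soluble group in which every element of the derived subgroup G' has finite order. Then G' is locally finite. -/
/-!
Locally finite groups are closed under extensions: a finitely generated subgroup has finite image
in the quotient, so its intersection with the kernel has finite index in it, is therefore finitely
generated by Schreier's lemma, and hence finite. Finitely generated torsion abelian groups are
finite, so a torsion soluble group is locally finite by induction along its derived series, each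
step being an extension of the derived subgroup by the torsion abelianization.
-/

open Subgroup

theorem map_subtype_derivedSeries_commutator (G : Type*) [Group G] (n : ℕ) :
    (derivedSeries (commutator G) n).map (commutator G).subtype = derivedSeries G (n + 1) := by
  induction n with
  | zero => rw [derivedSeries_zero, ← MonoidHom.range_eq_map, range_subtype, derivedSeries_one]
  | succ n ih => rw [derivedSeries_succ, map_commutator, ih, derivedSeries_succ G (n + 1)]

theorem derivedSeries_commutator_eq_bot_iff (G : Type*) [Group G] (n : ℕ) :
    derivedSeries (commutator G) n = ⊥ ↔ derivedSeries G (n + 1) = ⊥ := by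
  rw [← map_subtype_derivedSeries_commutator,
    map_eq_bot_iff_of_injective _ (commutator G).subtype_injective]

def Group.IsLocallyFinite (G : Type*) [Group G] : Prop :=
  ∀ H : Subgroup G, H.FG → Finite H

namespace Group.IsLocallyFinite

variable {G K Q : Type*} [Group G] [Group K] [Group Q]

theorem finite_range (hG : IsLocallyFinite G) [Group.FG K] (f : K →* G) : Finite f.range :=
  hG _ ((fg_iff_subgroup_fg _).mp inferInstance)

theorem finite_of_injective (hG : IsLocallyFinite G) [Group.FG K] {f : K →* G}
    (hf : Function.Injective f) : Finite K :=
  have := hG.finite_range f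
  .of_injective _ (MonoidHom.rangeRestrict_injective_iff.mpr hf)

theorem of_ker (f : G →* Q) (hker : IsLocallyFinite f.ker) (hQ : IsLocallyFinite Q) :
    IsLocallyFinite G := by
  intro H hH
  have : Group.FG H := (fg_iff_subgroup_fg H).mpr hH
  let φ := f.comp H.subtype
  have : Finite φ.range := hQ.finite_range φ
  have : Group.FG φ.ker := fg_of_index_ne_zero _
  let ι : φ.ker →* f.ker := (H.subtype.comp φ.ker.subtype).codRestrict f.ker fun k => k.2
  have : Finite φ.ker := hker.finite_of_injective (f := ι) fun _ _ hab =>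
    Subtype.val_injective <| Subtype.val_injective <| congrArg (Subtype.val : f.ker → G) hab
  exact φ.finite_iff_finite_ker_range.mpr ⟨‹_›, ‹_›⟩

end Group.IsLocallyFinite

theorem CommGroup.isLocallyFinite_of_isMulTorsion {A : Type*} [CommGroup A]
    (hA : IsMulTorsion A) : Group.IsLocallyFinite A := fun H hH =>
  have : Group.FG H := (Group.fg_iff_subgroup_fg H).mpr hH
  CommGroup.finite_of_fg_isMulTorsion _ (hA.subgroup H)

namespace Group.IsLocallyFinite

theorem of_derivedSeries_eq_bot_of_isMulTorsion {G : Type*} [Group G] {n : ℕ}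
    (hn : derivedSeries G n = ⊥) (htors : IsMulTorsion G) : IsLocallyFinite G := by
  induction n generalizing G with
  | zero =>
    intro H _
    obtain rfl : H = ⊥ := le_bot_iff.mp (hn ▸ le_top)
    infer_instance
  | succ n ih =>
    refine of_ker Abelianization.of ?_ (CommGroup.isLocallyFinite_of_isMulTorsion
      (htors.of_surjective (f := Abelianization.of) QuotientGroup.mk_surjective))
    rw [Abelianization.ker_of]
    exact ih ((derivedSeries_commutator_eq_bot_iff G n).mpr hn) (htors.subgroup _)

theorem of_isSolvable_of_isMulTorsion (G : Type*) [Group G] [hG : IsSolvable G]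
    (htors : IsMulTorsion G) : IsLocallyFinite G :=
  let ⟨_, hn⟩ := hG.solvable
  of_derivedSeries_eq_bot_of_isMulTorsion hn htors

end Group.IsLocallyFinite

theorem commutator_locallyFinite_of_solvable (G : Type*) [Group G]
    (hsol : IsSolvable G) (hord : ∀ x ∈ commutator G, IsOfFinOrder x) :
    ∀ H : Subgroup ↥(commutator G), H.FG → Finite ↥H :=
  have : Group.IsSolvable G := hsol
  Group.IsLocallyFinite.of_isSolvable_of_isMulTorsion (commutator G)
    fun x => Submonoid.isOfFinOrder_coe.mp (hord x x.2)
end
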